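/- arXiv:2205.05044 — 6 statements merged into one kernel-verified Lean document; each statement's English description precedes it below -/
import Mathlib

section
/- If G is a graph, X and Y are subsets of its vertex set with nonempty intersection, and both induced subgraphs G[X] and G[Y] contain m edge-disjoint spanning trees (i.e., are m-tree-connected), then the induced subgraph G[X ∪ Y] is also m-tree-connected. -/
open SimpleGraph

def IsTreeConn {V : Type*} (m : ℕ) (G : SimpleGraph V) : Prop :=
  ∃ T : Fin m → SimpleGraph V, (∀ i, T i ≤ G) ∧ (∀ i, (T i).IsTree) ∧
    ∀ i j, i ≠ j → Disjoint (T i).edgeSet (T j).edgeSet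

noncomputable def eIn {V : Type*} (G : SimpleGraph V) (S : Set V) : ℕ :=
  {e ∈ G.edgeSet | ∀ v ∈ e, v ∈ S}.ncard

def IsSparse {V : Type*} (m : ℕ) (G : SimpleGraph V) : Prop :=
  ∀ S : Set V, S.Nonempty → (eIn G S : ℤ) ≤ m * S.ncard - m

def mComp {V : Type*} (m : ℕ) (G : SimpleGraph V) (v : V) : Set V :=
  ⋃₀ {X : Set V | v ∈ X ∧ IsTreeConn m (G.induce X)}

noncomputable def crossE {V : Type*} (m : ℕ) (G : SimpleGraph V) : ℕ :=
  {e ∈ G.edgeSet | ∃ u ∈ e, ∃ w ∈ e, mComp m G u ≠ mComp m G w}.ncard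

noncomputable def Omega {V : Type*} (m : ℕ) (G : SimpleGraph V) : ℤ :=
  m * (Set.range (mComp m G)).ncard - crossE m G

/- The trees of `G[X]` and of `G[Y]` are carried into `G[X ∪ Y]`. The `i`-th new subgraph is the
`i`-th tree of `G[X]` together with the edges of the `i`-th tree of `G[Y]` used by no tree of
`G[X]`. These subgraphs stay pairwise edge-disjoint, and each is connected: a deleted edge of the
`Y`-tree has both ends in `X`, which the `X`-tree already connects, and the two trees meet at a
vertex of `X ∩ Y`. A spanning tree of each subgraph finishes the proof. -/

open Function

theorem pairwise_disjoint_sup_sdiff {α ι : Type*} [GeneralizedBooleanAlgebra α] {A B : ι → α}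
    {C : α} (hAC : ∀ i, A i ≤ C) (hA : Pairwise (Disjoint on A)) (hB : Pairwise (Disjoint on B)) :
    Pairwise (Disjoint on fun i => A i ⊔ B i \ C) := by
  intro i j hij
  simp only [onFun, disjoint_sup_left, disjoint_sup_right]
  exact ⟨⟨hA hij, disjoint_sdiff_self_left.mono_right (hAC j)⟩,
    ⟨disjoint_sdiff_self_right.mono_left (hAC i), (hB hij).mono sdiff_le sdiff_le⟩⟩

namespace SimpleGraph

variable {V W : Type*}

theorem Reachable.of_forall_adj {G H : SimpleGraph V} (h : ∀ u v, G.Adj u v → H.Reachable u v)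
    {u v : V} (huv : G.Reachable u v) : H.Reachable u v := by
  obtain ⟨p⟩ := huv
  induction p with
  | nil => rfl
  | cons hadj _ ih => exact (h _ _ hadj).trans ih

theorem disjoint_map_of_disjoint (f : V ↪ W) {G H : SimpleGraph V} (h : Disjoint G H) :
    Disjoint (G.map f) (H.map f) := by
  rw [← disjoint_edgeSet, edgeSet_map, edgeSet_map,
    Set.disjoint_image_iff f.sym2Map.injective]
  exact disjoint_edgeSet.2 h

theorem connected_sup_sdiff {A B C : SimpleGraph W} {P Q : Set W}
    (hA : ∀ u ∈ P, ∀ v ∈ P, A.Reachable u v) (hB : ∀ u ∈ Q, ∀ v ∈ Q, B.Reachable u v)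
    (hC : C.support ⊆ P) (hcover : ∀ w, w ∈ P ∨ w ∈ Q) (hmeet : (P ∩ Q).Nonempty) :
    (A ⊔ B \ C).Connected := by
  obtain ⟨z, hzP, hzQ⟩ := hmeet
  have : Nonempty W := ⟨z⟩
  have hB_le : ∀ u v, B.Reachable u v → (A ⊔ B \ C).Reachable u v := by
    refine fun u v => Reachable.of_forall_adj fun a b hab => ?_
    by_cases hCab : C.Adj a b
    · exact (hA a (hC hCab.left_mem_support) b (hC hCab.right_mem_support)).mono le_sup_left
    · exact Adj.reachable (Or.inr ⟨hab, hCab⟩)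
  have hz : ∀ w, (A ⊔ B \ C).Reachable w z := fun w =>
    (hcover w).elim (fun hw => (hA w hw z hzP).mono le_sup_left) (fun hw => hB_le w z (hB w hw z hzQ))
  exact ⟨fun u v => (hz u).trans (hz v).symm⟩

end SimpleGraph

theorem IsTreeConn.of_connected {V : Type*} {m : ℕ} {G : SimpleGraph V}
    (F : Fin m → SimpleGraph V) (hle : ∀ i, F i ≤ G) (hconn : ∀ i, (F i).Connected)
    (hdisj : Pairwise (Disjoint on F)) : IsTreeConn m G := by
  choose T hTF hT using fun i => (hconn i).exists_isTree_le
  exact ⟨T, fun i => (hTF i).trans (hle i), hT, fun i j hij =>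
    disjoint_edgeSet.2 ((hdisj hij).mono (hTF i) (hTF j))⟩

theorem IsTreeConn.exists_family_of_subset {V : Type*} {m : ℕ} {G : SimpleGraph V} {X Z : Set V}
    (hXZ : X ⊆ Z) (hX : IsTreeConn m (G.induce X)) :
    ∃ A : Fin m → SimpleGraph Z, (∀ i, A i ≤ G.induce Z) ∧ Pairwise (Disjoint on A) ∧
      (∀ i, (A i).support ⊆ Subtype.val ⁻¹' X) ∧
      ∀ i, ∀ u ∈ Subtype.val ⁻¹' X, ∀ v ∈ Subtype.val ⁻¹' X, (A i).Reachable u v := by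
  obtain ⟨T, hTG, hT, hTdisj⟩ := hX
  let e := Set.embeddingOfSubset X Z hXZ
  refine ⟨fun i => (T i).map e, ?_, ?_, ?_, ?_⟩
  · rintro i u v ⟨-, a, b, hab, rfl, rfl⟩
    exact hTG i hab
  · exact fun i j hij => disjoint_map_of_disjoint e (disjoint_edgeSet.1 (hTdisj i j hij))
  · rintro i u ⟨v, -, a, b, -, rfl, -⟩
    exact a.2
  · intro i u hu v hv
    exact ((hT i).connected.preconnected ⟨u, hu⟩ ⟨v, hv⟩).map (Embedding.map e (T i)).toHom

theorem stmt0_general {V : Type*} (m : ℕ) (G : SimpleGraph V)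
    (X Y : Set V) (hXY : (X ∩ Y).Nonempty)
    (hX : IsTreeConn m (G.induce X)) (hY : IsTreeConn m (G.induce Y)) :
    IsTreeConn m (G.induce (X ∪ Y)) := by
  obtain ⟨A, hAG, hAdisj, hAsupp, hAreach⟩ := hX.exists_family_of_subset Set.subset_union_left
  obtain ⟨B, hBG, hBdisj, -, hBreach⟩ := hY.exists_family_of_subset Set.subset_union_right
  obtain ⟨z, hzX, hzY⟩ := hXY
  have hsupp : (⨆ j, A j).support ⊆ Subtype.val ⁻¹' X := by
    rintro u ⟨v, huv⟩
    obtain ⟨j, hj⟩ := iSup_adj.1 huv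
    exact hAsupp j hj.left_mem_support
  refine IsTreeConn.of_connected (fun i => A i ⊔ B i \ ⨆ j, A j)
    (fun i => sup_le (hAG i) (sdiff_le.trans (hBG i))) (fun i => ?_)
    (pairwise_disjoint_sup_sdiff (le_iSup A) hAdisj hBdisj)
  exact connected_sup_sdiff (hAreach i) (hBreach i) hsupp (fun w => w.2)
    ⟨⟨z, Or.inl hzX⟩, hzX, hzY⟩

theorem stmt0 {V : Type*} [Fintype V] (m : ℕ) (hm : 0 < m) (G : SimpleGraph V)
    (X Y : Set V) (hXY : (X ∩ Y).Nonempty)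
    (hX : IsTreeConn m (G.induce X)) (hY : IsTreeConn m (G.induce Y)) :
    IsTreeConn m (G.induce (X ∪ Y)) :=
  stmt0_general m G X Y hXY hX hY
end

section
/- Let G be an m-sparse graph, let x and y be two vertices, and let Q be a minimal m-tree-connected subgraph of G containing both x and y (minimal with respect to containment among m-tree-connected subgraphs containing x and y). Then every vertex z of Q other than x and y has degree at least m+1 in Q. -/
open SimpleGraph

/-- Transfer reachability along a comap by an injective function, provided the walk's
support lies in the range of the function. -/
lemma comap_reachable_aux {U W : Type*} {G : SimpleGraph W} {f : U → W}
    (hf : Function.Injective f) :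
    ∀ {s t : W} (p : G.Walk s t), (∀ w ∈ p.support, ∃ a, f a = w) →
      ∀ (a b : U), f a = s → f b = t → (G.comap f).Reachable a b := by
  intro s t p
  induction p with
  | nil =>
    intro _ a b ha hb
    obtain rfl : a = b := hf (ha.trans hb.symm)
    exact Reachable.refl a
  | @cons u v w h q ih =>
    intro hsup a b ha hb
    obtain ⟨c, hc⟩ := hsup v (by simp [Walk.support_cons, q.start_mem_support])
    have hadj : (G.comap f).Adj a c := by
      simp only [comap_adj, ha, hc]; exact h
    exact hadj.reachable.trans (ih (fun x hx => hsup x (by simp [hx])) c b hc hb)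

lemma comap_acyclic_aux {U W : Type*} (f : U ↪ W) {G : SimpleGraph W}
    (hG : G.IsAcyclic) : (G.comap ⇑f).IsAcyclic := by
  intro v c hc
  exact hG (c.map (SimpleGraph.Embedding.comap f G).toHom)
    (hc.map (SimpleGraph.Embedding.comap f G).injective)

theorem stmt3 {V : Type*} [Fintype V] (m : ℕ) (hm : 0 < m) (G : SimpleGraph V)
    (hsp : IsSparse m G) (x y : V) (Q : G.Subgraph)
    (hx : x ∈ Q.verts) (hy : y ∈ Q.verts) (htc : IsTreeConn m Q.coe)
    (hmin : ∀ Q' : G.Subgraph, Q' ≤ Q → x ∈ Q'.verts → y ∈ Q'.verts →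
      IsTreeConn m Q'.coe → Q' = Q)
    (z : V) (hz : z ∈ Q.verts) (hzx : z ≠ x) (hzy : z ≠ y) :
    m + 1 ≤ (Q.neighborSet z).ncard := by
  classical
  by_contra hcon
  push_neg at hcon
  have hle : (Q.neighborSet z).ncard ≤ m := by omega
  obtain ⟨T, hTle, hTtree, hTdisj⟩ := htc
  set z' : ↥Q.verts := ⟨z, hz⟩ with hz'def
  set x' : ↥Q.verts := ⟨x, hx⟩ with hx'def
  have hz'x' : z' ≠ x' := fun h => hzx (congrArg Subtype.val h)
  -- Each tree gives a neighbor of z'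
  have hnbr : ∀ i : Fin m, ∃ w : ↥Q.verts, (T i).Adj z' w := by
    intro i
    obtain ⟨p⟩ := (hTtree i).isConnected.preconnected z' x'
    have hnil : ¬ p.Nil := SimpleGraph.Walk.not_nil_of_ne hz'x'
    exact ⟨p.getVert 1, p.adj_snd hnil⟩
  choose w hw using hnbr
  have hwinj : Function.Injective w := by
    intro i j hij
    by_contra hne
    have h1 : s(z', w i) ∈ (T i).edgeSet := (hw i)
    have h2 : s(z', w i) ∈ (T j).edgeSet := by
      rw [hij]; exact (hw j)
    exact Set.disjoint_left.mp (hTdisj i j hne) h1 h2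
  set g : Fin m → V := fun i => (w i : V) with hgdef
  have hginj : Function.Injective g := fun i j h => hwinj (Subtype.ext h)
  have hgmem : ∀ i, g i ∈ Q.neighborSet z := by
    intro i
    have := hTle i (hw i)
    rw [SimpleGraph.Subgraph.coe_adj] at this
    exact this
  have hsub : Set.range g ⊆ Q.neighborSet z := by
    rintro _ ⟨i, rfl⟩; exact hgmem i
  have hcard : (Set.range g).ncard = m := by
    rw [← Nat.card_coe_set_eq, Nat.card_range_of_injective hginj,
      Nat.card_eq_fintype_card, Fintype.card_fin]
  have heq : Set.range g = Q.neighborSet z :=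
    Set.eq_of_subset_of_ncard_le hsub (by omega) (Set.toFinite _)
  -- uniqueness of z''s neighbor in each tree
  have huniq : ∀ (i : Fin m) (v : ↥Q.verts), (T i).Adj z' v → v = w i := by
    intro i v hv
    have hvm : (v : V) ∈ Q.neighborSet z := by
      have := hTle i hv
      rw [SimpleGraph.Subgraph.coe_adj] at this
      exact this
    rw [← heq] at hvm
    obtain ⟨j, hj⟩ := hvm
    have hvj : v = w j := Subtype.ext hj.symm
    by_cases hji : j = i
    · rw [hvj, hji]
    · exfalso
      have h1 : s(z', v) ∈ (T i).edgeSet := hv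
      have h2 : s(z', v) ∈ (T j).edgeSet := by
        rw [hvj]; exact (hw j)
      exact Set.disjoint_left.mp (hTdisj j i hji) h2 h1
  -- walks avoiding z'
  have hpath : ∀ (i : Fin m) (a b : ↥Q.verts), a ≠ z' → b ≠ z' →
      ∃ p : (T i).Walk a b, z' ∉ p.support := by
    intro i a b ha hb
    obtain ⟨p0⟩ := (hTtree i).isConnected.preconnected a b
    refine ⟨(p0.toPath : (T i).Walk a b), fun hmem => ?_⟩
    set p : (T i).Walk a b := (p0.toPath : (T i).Walk a b) with hpdef
    have hp : p.IsPath := p0.toPath.2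
    set q1 := p.takeUntil z' hmem with hq1
    set q2 := p.dropUntil z' hmem with hq2
    have hspec : q1.append q2 = p := p.take_spec hmem
    have hnodup : (q1.append q2).support.Nodup := by
      rw [hspec]; exact hp.support_nodup
    rw [SimpleGraph.Walk.support_append] at hnodup
    have hdisj := List.disjoint_of_nodup_append hnodup
    have h1 : ¬ q1.Nil := SimpleGraph.Walk.not_nil_of_ne ha
    have h2 : ¬ q2.Nil := SimpleGraph.Walk.not_nil_of_ne (fun h => hb h.symm)
    have h1r : ¬ q1.reverse.Nil := SimpleGraph.Walk.not_nil_of_ne (fun h => ha h.symm)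
    -- the two neighbors of z' along p
    have e1 : (T i).Adj z' (q1.reverse.getVert 1) := q1.reverse.adj_snd h1r
    have e2 : (T i).Adj z' (q2.getVert 1) := q2.adj_snd h2
    have m1 : q1.reverse.getVert 1 ∈ q1.support := by
      have h' : q1.reverse.getVert 1 ∈ q1.reverse.support := by
        have := q1.reverse.tail.start_mem_support
        have hsub' := SimpleGraph.Walk.support_tail_of_not_nil _ h1r
        rw [hsub'] at this
        exact List.mem_of_mem_tail this
      rwa [SimpleGraph.Walk.support_reverse, List.mem_reverse] at h'
    have m2 : q2.getVert 1 ∈ q2.support.tail := by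
      have := q2.tail.start_mem_support
      rwa [SimpleGraph.Walk.support_tail_of_not_nil _ h2] at this
    rw [huniq i _ e1] at m1
    rw [huniq i _ e2] at m2
    exact hdisj m1 m2
  -- the deleted subgraph
  set Q' := Q.deleteVerts {z} with hQ'def
  have hxz : x ∈ Q'.verts := ⟨hx, fun h => hzx (Set.mem_singleton_iff.mp h).symm⟩
  have hyz : y ∈ Q'.verts := ⟨hy, fun h => hzy (Set.mem_singleton_iff.mp h).symm⟩
  set f : ↥Q'.verts → ↥Q.verts := fun v => ⟨v.1, v.2.1⟩ with hfdef
  have hfinj : Function.Injective f := by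
    intro a b h
    have hval := congrArg Subtype.val h
    exact Subtype.ext hval
  have hfne : ∀ a : ↥Q'.verts, f a ≠ z' := by
    intro a h
    exact a.2.2 (Set.mem_singleton_iff.mpr (congrArg Subtype.val h))
  have hQ'tc : IsTreeConn m Q'.coe := by
    refine ⟨fun i => (T i).comap f, fun i => ?_, fun i => ?_, fun i j hij => ?_⟩
    · intro a b hab
      have hQab : Q.Adj (a : V) (b : V) := by
        have := hTle i hab
        rw [SimpleGraph.Subgraph.coe_adj] at this
        exact this
      rw [SimpleGraph.Subgraph.coe_adj]
      exact SimpleGraph.Subgraph.deleteVerts_adj.mpr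
        ⟨a.2.1, a.2.2, b.2.1, b.2.2, hQab⟩
    · constructor
      · haveI : Nonempty ↥Q'.verts := ⟨⟨x, hxz⟩⟩
        refine ⟨fun a b => ?_⟩
        obtain ⟨p, hp⟩ := hpath i (f a) (f b) (hfne a) (hfne b)
        refine comap_reachable_aux hfinj p ?_ a b rfl rfl
        intro v hv
        have hvz : v ≠ z' := fun h => hp (h ▸ hv)
        refine ⟨⟨v.1, v.2, fun h => hvz (Subtype.ext (Set.mem_singleton_iff.mp h))⟩, rfl⟩
      · exact comap_acyclic_aux ⟨f, hfinj⟩ (hTtree i).IsAcyclic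
    · rw [Set.disjoint_left]
      intro e he1 he2
      induction e with
      | _ a b =>
        have h1 : s(f a, f b) ∈ (T i).edgeSet := he1
        have h2 : s(f a, f b) ∈ (T j).edgeSet := he2
        exact Set.disjoint_left.mp (hTdisj i j hij) h1 h2
  have hQQ : Q' = Q := hmin Q' (SimpleGraph.Subgraph.deleteVerts_le) hxz hyz hQ'tc
  have : z ∈ Q'.verts := hQQ ▸ hz
  exact this.2 rfl
end

section
/- Let G be a graph with an m-sparse spanning subgraph F, let xy be an edge of G not in F, and let Q be a minimal m-tree-connected subgraph of F containing x and y. Then for every edge e of Q, the graph F - e + xy obtained from F by deleting e and adding xy is still m-sparse. -/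
open SimpleGraph

/-! Adding `xy` can only violate sparsity on a set `S ∋ x, y` that is tight in `F`, i.e. spans
exactly `m|S| - m` edges of `F`; it suffices that every such `S` contains `V(Q)`, because then
`e` lies inside `S` and the edge count of `S` does not change. Restrict the `m` edge-disjoint
spanning trees of `Q` to `B = V(Q) ∩ S`. The tree edges leaving `B` are edges of `F` inside
`V(Q) ∪ S` but not inside `S`, so sparsity of `V(Q) ∪ S` together with tightness of `S` leaves
at least `m(|B| - 1)` tree edges inside `B`. The restrictions are forests, so each of them is a
spanning tree of `B`; thus `Q[B]` is `m`-tree-connected and minimality gives `B = V(Q)`. -/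

namespace SimpleGraph

variable {V : Type*}

lemma IsAcyclic.exists_isTree_ge [Nonempty V] {G : SimpleGraph V} (h : G.IsAcyclic) :
    ∃ T, G ≤ T ∧ T.IsTree := by
  obtain ⟨T, hGT, -, hT⟩ := connected_top.exists_isTree_le_of_le_of_isAcyclic le_top h
  exact ⟨T, hGT, hT⟩

lemma IsTree.ncard_edgeSet_add_one [Finite V] {G : SimpleGraph V} (h : G.IsTree) :
    G.edgeSet.ncard + 1 = Nat.card V := by
  rw [← Nat.card_coe_set_eq]
  exact (isTree_iff_connected_and_card.mp h).2

lemma IsAcyclic.ncard_edgeSet_add_one_le [Finite V] [Nonempty V] {G : SimpleGraph V}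
    (h : G.IsAcyclic) : G.edgeSet.ncard + 1 ≤ Nat.card V := by
  obtain ⟨T, hGT, hT⟩ := h.exists_isTree_ge
  rw [← hT.ncard_edgeSet_add_one]
  exact Nat.add_le_add_right (Set.ncard_le_ncard (edgeSet_mono hGT)) 1

lemma IsAcyclic.isTree_of_card_le [Finite V] [Nonempty V] {G : SimpleGraph V} (h : G.IsAcyclic)
    (hcard : Nat.card V ≤ G.edgeSet.ncard + 1) : G.IsTree := by
  obtain ⟨T, hGT, hT⟩ := h.exists_isTree_ge
  have hE : G.edgeSet = T.edgeSet :=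
    Set.eq_of_subset_of_ncard_le (edgeSet_mono hGT) (by have := hT.ncard_edgeSet_add_one; omega)
  rwa [edgeSet_inj.mp hE]

lemma ncard_edgeSet_induce (H : SimpleGraph V) (s : Set V) :
    (H.induce s).edgeSet.ncard = eIn H s := by
  have hcoe : (H.induce s).spanningCoe.edgeSet = {e ∈ H.edgeSet | ∀ v ∈ e, v ∈ s} := by
    ext ⟨a, b⟩
    simp only [mem_edgeSet, map_adj, comap_adj, Function.Embedding.coe_subtype, Set.mem_ofPred_eq,
      Sym2.mem_iff, forall_eq_or_imp, forall_eq]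
    constructor
    · rintro ⟨a, b, h, rfl, rfl⟩
      exact ⟨h, a.2, b.2⟩
    · rintro ⟨h, ha, hb⟩
      exact ⟨⟨a, ha⟩, ⟨b, hb⟩, h, rfl, rfl⟩
  rw [eIn, ← hcoe, edgeSet_map, Set.ncard_image_of_injective _ (Function.Embedding.injective _)]

section Finite

variable [Finite V]

lemma eIn_mono {H H' : SimpleGraph V} (h : H ≤ H') (S : Set V) : eIn H S ≤ eIn H' S :=
  Set.ncard_le_ncard fun _ he => ⟨edgeSet_mono h he.1, he.2⟩

lemma eIn_add_eIn_le {F U : SimpleGraph V} (hUF : U ≤ F) (A S : Set V) :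
    eIn F S + eIn U A ≤ eIn F (A ∪ S) + eIn U (A ∩ S) := by
  unfold eIn
  rw [← Set.ncard_union_add_ncard_inter]
  refine add_le_add (Set.ncard_le_ncard ?_) (Set.ncard_le_ncard ?_)
  · rintro e (⟨he, hS⟩ | ⟨he, hA⟩)
    exacts [⟨he, fun v hv => Or.inr (hS v hv)⟩,
      ⟨edgeSet_mono hUF he, fun v hv => Or.inl (hA v hv)⟩]
  · exact fun e ⟨⟨_, hS⟩, he, hA⟩ => ⟨he, fun v hv => ⟨hA v hv, hS v hv⟩⟩

lemma eIn_iSup {ι : Type*} [Fintype ι] (W : ι → SimpleGraph V)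
    (hW : Pairwise fun i j => Disjoint (W i).edgeSet (W j).edgeSet) (S : Set V) :
    eIn (⨆ i, W i) S = ∑ i, eIn (W i) S := by
  have hunion : {e ∈ (⨆ i, W i).edgeSet | ∀ v ∈ e, v ∈ S} =
      ⋃ i, {e ∈ (W i).edgeSet | ∀ v ∈ e, v ∈ S} := by
    ext e
    simp [edgeSet_iSup]
  rw [eIn, hunion, Set.ncard_iUnion_of_finite (fun _ => Set.toFinite _)
    (fun i j hij => (hW hij).mono (Set.sep_subset _ _) (Set.sep_subset _ _)),
    finsum_eq_sum_of_fintype]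
  rfl

lemma eIn_deleteEdges_add_one {H : SimpleGraph V} {e : Sym2 V} {S : Set V}
    (he : e ∈ H.edgeSet) (heS : ∀ v ∈ e, v ∈ S) :
    eIn (H.deleteEdges {e}) S + 1 = eIn H S := by
  have hdiff : {e' ∈ (H.deleteEdges {e}).edgeSet | ∀ v ∈ e', v ∈ S} =
      {e' ∈ H.edgeSet | ∀ v ∈ e', v ∈ S} \ {e} := by
    ext e'
    simp only [edgeSet_deleteEdges, Set.mem_sdiff, Set.mem_ofPred_eq]
    tauto
  rw [eIn, eIn, hdiff, Set.ncard_sdiff_singleton_add_one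
    (show e ∈ {e' ∈ H.edgeSet | ∀ v ∈ e', v ∈ S} from ⟨he, heS⟩)]

lemma eIn_sup_edge_le (H : SimpleGraph V) (x y : V) (S : Set V) :
    eIn (H ⊔ fromEdgeSet {s(x, y)}) S ≤ eIn H S + 1 := by
  refine le_trans (Set.ncard_le_ncard ?_) (Set.ncard_insert_le s(x, y)
    {e ∈ H.edgeSet | ∀ v ∈ e, v ∈ S})
  rintro e ⟨he, heS⟩
  simp only [edgeSet_sup, edgeSet_fromEdgeSet, Set.mem_union, Set.mem_sdiff] at he
  rcases he with he | ⟨rfl, -⟩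
  exacts [Or.inr ⟨he, heS⟩, Or.inl rfl]

lemma eIn_sup_edge_le_of_not_mem (H : SimpleGraph V) {x y : V} {S : Set V}
    (hxy : ¬ (x ∈ S ∧ y ∈ S)) : eIn (H ⊔ fromEdgeSet {s(x, y)}) S ≤ eIn H S := by
  refine Set.ncard_le_ncard ?_
  rintro e ⟨he, heS⟩
  simp only [edgeSet_sup, edgeSet_fromEdgeSet, Set.mem_union, Set.mem_sdiff] at he
  rcases he with he | ⟨rfl, -⟩
  · exact ⟨he, heS⟩
  · exact absurd ⟨heS x (Sym2.mem_mk_left x y), heS y (Sym2.mem_mk_right x y)⟩ hxy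

lemma isTree_induce_of_sum_le {ι : Type*} [Fintype ι] {W : ι → SimpleGraph V}
    {B : Set V} (hB : B.Nonempty) (hW : ∀ i, ((W i).induce B).IsAcyclic)
    (hsum : Fintype.card ι * (B.ncard - 1) ≤ ∑ i, eIn (W i) B) (i : ι) :
    ((W i).induce B).IsTree := by
  have : Nonempty B := hB.to_subtype
  have hle : ∀ j, eIn (W j) B ≤ B.ncard - 1 := fun j => by
    have := (hW j).ncard_edgeSet_add_one_le
    rw [ncard_edgeSet_induce, Nat.card_coe_set_eq] at this
    omega
  have heq := (Finset.sum_eq_sum_iff_of_le fun j _ => hle j).mp <|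
    le_antisymm (Finset.sum_le_sum fun j _ => hle j)
      (by rwa [Finset.sum_const, smul_eq_mul, Finset.card_univ])
  refine (hW i).isTree_of_card_le ?_
  rw [ncard_edgeSet_induce, Nat.card_coe_set_eq, heq i (Finset.mem_univ i)]
  omega

end Finite

end SimpleGraph

section TreePacking

variable {V : Type*} {m : ℕ} {F : SimpleGraph V}

lemma IsSparse.eIn_le_of_tight [Finite V] {U : SimpleGraph V}
    (hF : IsSparse m F) (hUF : U ≤ F) (A : Set V) {S : Set V} (hS : S.Nonempty)
    (htight : (eIn F S : ℤ) = m * S.ncard - m) :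
    (eIn U A : ℤ) + m * (A ∩ S).ncard ≤ eIn U (A ∩ S) + m * A.ncard := by
  have hunion := hF (A ∪ S) (hS.mono Set.subset_union_right)
  have hcount : (eIn F S + eIn U A : ℤ) ≤ eIn F (A ∪ S) + eIn U (A ∩ S) := by
    exact_mod_cast SimpleGraph.eIn_add_eIn_le hUF A S
  have hcard : ((A ∪ S).ncard + (A ∩ S).ncard : ℤ) = A.ncard + S.ncard := by
    exact_mod_cast Set.ncard_union_add_ncard_inter A S
  have : (m : ℤ) * (A ∪ S).ncard + m * (A ∩ S).ncard = m * A.ncard + m * S.ncard := by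
    rw [← mul_add, ← mul_add, hcard]
  linarith

lemma IsTreeConn.exists_spanningCoe {Q : F.Subgraph} (h : IsTreeConn m Q.coe) :
    ∃ W : Fin m → SimpleGraph V, (∀ i, W i ≤ Q.spanningCoe) ∧
      (∀ i, ((W i).induce Q.verts).IsTree) ∧
      Pairwise fun i j => Disjoint (W i).edgeSet (W j).edgeSet := by
  obtain ⟨T, hTQ, hT, hdisj⟩ := h
  refine ⟨fun i => (T i).spanningCoe, fun i => ?_, fun i => ?_, fun i j hij => ?_⟩
  · exact Q.spanningCoe_coe ▸ map_monotone _ (hTQ i)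
  · rw [induce_spanningCoe]
    exact hT i
  · simp only [edgeSet_map]
    exact Set.disjoint_image_of_injective (Function.Embedding.injective _) (hdisj i j hij)

lemma isTreeConn_induce_coe (Q : F.Subgraph) (B : Set V) {W : Fin m → SimpleGraph V}
    (hWQ : ∀ i, W i ≤ Q.spanningCoe)
    (hW : Pairwise fun i j => Disjoint (W i).edgeSet (W j).edgeSet)
    (hT : ∀ i, ((W i).induce B).IsTree) : IsTreeConn m (Q.induce B).coe := by
  refine ⟨fun i => (W i).induce B, fun i u v huv => ⟨u.2, v.2, hWQ i huv⟩, hT,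
    fun i j hij => Set.disjoint_left.mpr fun e => ?_⟩
  induction e using Sym2.ind with
  | _ a b =>
    exact fun (ha : s(a.1, b.1) ∈ (W i).edgeSet) hb => Set.disjoint_left.mp (hW hij) ha hb

lemma IsSparse.verts_subset_of_tight [Finite V] (hF : IsSparse m F) {x y : V} {Q : F.Subgraph}
    (hx : x ∈ Q.verts) (hy : y ∈ Q.verts) (htc : IsTreeConn m Q.coe)
    (hmin : ∀ Q' : F.Subgraph, Q' ≤ Q → x ∈ Q'.verts → y ∈ Q'.verts →
      IsTreeConn m Q'.coe → Q' = Q)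
    {S : Set V} (hxS : x ∈ S) (hyS : y ∈ S) (hS : (eIn F S : ℤ) = m * S.ncard - m) :
    Q.verts ⊆ S := by
  obtain ⟨W, hWQ, hWtree, hWdisj⟩ := htc.exists_spanningCoe
  have hB : (Q.verts ∩ S).Nonempty := ⟨x, hx, hxS⟩
  have hWA : ∀ i, eIn (W i) Q.verts = Q.verts.ncard - 1 := fun i => by
    rw [← ncard_edgeSet_induce, ← Nat.card_coe_set_eq Q.verts,
      ← (hWtree i).ncard_edgeSet_add_one, Nat.add_sub_cancel]
  have hcount := hF.eIn_le_of_tight (iSup_le fun i => (hWQ i).trans Q.spanningCoe_le) Q.verts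
    ⟨x, hxS⟩ hS
  rw [eIn_iSup W hWdisj, eIn_iSup W hWdisj, Finset.sum_congr rfl fun i _ => hWA i,
    Finset.sum_const, Finset.card_univ, Fintype.card_fin, smul_eq_mul] at hcount
  have hsum : m * ((Q.verts ∩ S).ncard - 1) ≤ ∑ i, eIn (W i) (Q.verts ∩ S) := by
    have hA1 : 1 ≤ Q.verts.ncard := (Set.ncard_pos).mpr (hB.mono Set.inter_subset_left)
    have hB1 : 1 ≤ (Q.verts ∩ S).ncard := (Set.ncard_pos).mpr hB
    zify [hA1, hB1] at hcount ⊢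
    linarith
  have htrees := isTree_induce_of_sum_le hB
    (fun i => (hWtree i).isAcyclic.embedding ((W i).induceHomOfLE Set.inter_subset_left))
    (by rwa [Fintype.card_fin])
  have hQB : Q.induce (Q.verts ∩ S) ≤ Q :=
    (Subgraph.induce_mono_right Set.inter_subset_left).trans Q.induce_self_verts.le
  have hQ := hmin _ hQB ⟨hx, hxS⟩ ⟨hy, hyS⟩ (isTreeConn_induce_coe Q _ hWQ hWdisj htrees)
  exact Set.inter_eq_left.mp (congrArg Subgraph.verts hQ)

end TreePacking

theorem stmt4_general {V : Type*} [Fintype V] (m : ℕ) (F : SimpleGraph V)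
    (hsp : IsSparse m F) (x y : V)
    (Q : F.Subgraph) (hx : x ∈ Q.verts) (hy : y ∈ Q.verts)
    (htc : IsTreeConn m Q.coe)
    (hmin : ∀ Q' : F.Subgraph, Q' ≤ Q → x ∈ Q'.verts → y ∈ Q'.verts →
      IsTreeConn m Q'.coe → Q' = Q)
    (e : Sym2 V) (he : e ∈ Q.edgeSet) :
    IsSparse m (F.deleteEdges {e} ⊔ SimpleGraph.fromEdgeSet {s(x, y)}) := by
  intro S hS
  have hF := hsp S hS
  have hdel := eIn_mono (F.deleteEdges_le {e}) S
  by_cases hxyS : x ∈ S ∧ y ∈ S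
  · have hadd := eIn_sup_edge_le (F.deleteEdges {e}) x y S
    by_cases htight : (eIn F S : ℤ) = m * S.ncard - m
    · have hQS := hsp.verts_subset_of_tight hx hy htc hmin hxyS.1 hxyS.2 htight
      have hswap := eIn_deleteEdges_add_one (Q.edgeSet_subset he)
        fun v hv => hQS (Q.mem_verts_of_mem_edge he hv)
      omega
    · omega
  · have := eIn_sup_edge_le_of_not_mem (F.deleteEdges {e}) hxyS
    omega

theorem stmt4 {V : Type*} [Fintype V] (m : ℕ) (hm : 0 < m) (G F : SimpleGraph V)
    (hFG : F ≤ G) (hsp : IsSparse m F) (x y : V)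
    (hxy : G.Adj x y) (hnF : ¬ F.Adj x y)
    (Q : F.Subgraph) (hx : x ∈ Q.verts) (hy : y ∈ Q.verts)
    (htc : IsTreeConn m Q.coe)
    (hmin : ∀ Q' : F.Subgraph, Q' ≤ Q → x ∈ Q'.verts → y ∈ Q'.verts →
      IsTreeConn m Q'.coe → Q' = Q)
    (e : Sym2 V) (he : e ∈ Q.edgeSet) :
    IsSparse m (F.deleteEdges {e} ⊔ SimpleGraph.fromEdgeSet {s(x, y)}) :=
  stmt4_general m F hsp x y Q hx hy htc hmin e he
end

section
/- Let G be an m-tree-connected graph with an m-sparse spanning subgraph M. If G - e is not m-tree-connected for every edge e of G not in M, then G is minimally m-tree-connected, i.e., |E(G)| = m(|V(G)|-1). -/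
open SimpleGraph

/-!
Let `T₁, …, Tₘ` be edge-disjoint spanning trees of `G` and suppose an edge `g` of `G` lies in none
of them. Write `f → h` when, for some `i`, `f ∉ Tᵢ` and `h` lies on the `Tᵢ`-path between the ends
of `f`, so that `Tᵢ + f - h` is again a tree; let `R` be the set of edges reachable from `g`.
Performing the exchanges along a shortest chain from `g` to `z ∈ R`, in each tree from the far end
of the chain backwards, gives `m` edge-disjoint spanning trees of `G - z`; hence `R ⊆ M`.
On the other hand `R` contains the `Tᵢ`-path of each of its edges outside `Tᵢ`, so for every `i`
the edges of `R ∩ Tᵢ` connect the set `S` of ends of edges of `R`. Thus `|R| ≥ 1 + m (|S| - 1)`,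
contradicting the sparsity of `M`, and `G` is the union of the trees.
-/

namespace Relation

variable {α : Type*} {r : α → α → Prop}

lemma ReflTransGen.exists_chain {a b : α} (h : ReflTransGen r a b) :
    ∃ (k : ℕ) (f : ℕ → α), f 0 = a ∧ f k = b ∧ ∀ n < k, r (f n) (f (n + 1)) := by
  induction h with
  | refl => exact ⟨0, fun _ => a, rfl, rfl, by simp⟩
  | @tail b c _ hbc ih =>
    obtain ⟨k, f, hf0, hfk, hf⟩ := ih
    refine ⟨k + 1, fun n => if n ≤ k then f n else c, by simp [hf0], by simp, fun n hn => ?_⟩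
    rcases Nat.lt_succ_iff_lt_or_eq.mp hn with hn | rfl
    · simpa [hn.le, Nat.succ_le_of_lt hn] using hf n hn
    · simpa [hfk] using hbc

/-- Cutting out the part of a chain between the ends of a chord. -/
lemma chain_shortcut {k i j : ℕ} {f : ℕ → α} (hf : ∀ n < k, r (f n) (f (n + 1)))
    (hij : i < j) (hjk : j ≤ k) (hr : r (f i) (f j)) :
    ∃ g : ℕ → α, g 0 = f 0 ∧ g (k - (j - i - 1)) = f k ∧
      ∀ n < k - (j - i - 1), r (g n) (g (n + 1)) := by
  refine ⟨fun n => if n ≤ i then f n else f (n + (j - i - 1)), by simp, ?_, fun n hn => ?_⟩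
  · simp only [show ¬ k - (j - i - 1) ≤ i by omega, if_false]
    congr 1
    omega
  · rcases lt_trichotomy n i with hn | rfl | hn
    · simpa [hn.le, Nat.succ_le_of_lt hn] using hf n (by omega)
    · simpa [show n + 1 + (j - n - 1) = j by omega] using hr
    · simpa [show ¬ n ≤ i by omega, show ¬ n + 1 ≤ i by omega,
        show n + 1 + (j - i - 1) = n + (j - i - 1) + 1 by omega] using hf _ (by omega)

lemma ReflTransGen.exists_chordless_chain {a b : α} (h : ReflTransGen r a b) :
    ∃ (k : ℕ) (f : ℕ → α), f 0 = a ∧ f k = b ∧ (∀ n < k, r (f n) (f (n + 1))) ∧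
      Set.InjOn f (Set.Iic k) ∧ ∀ i j, i + 1 < j → j ≤ k → ¬ r (f i) (f j) := by
  classical
  have hex : ∃ k, ∃ f : ℕ → α, f 0 = a ∧ f k = b ∧ ∀ n < k, r (f n) (f (n + 1)) :=
    h.exists_chain
  obtain ⟨f, hf0, hfk, hf⟩ := Nat.find_spec hex
  have hchord : ∀ i j, i + 1 < j → j ≤ Nat.find hex → ¬ r (f i) (f j) := by
    intro i j hij hjk hr
    obtain ⟨g, hg0, hgk, hg⟩ := chain_shortcut hf (by omega) hjk hr
    exact absurd (Nat.find_min' hex ⟨g, hg0.trans hf0, hgk.trans hfk, hg⟩) (by omega)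
  have hne : ∀ i j, i < j → j ≤ Nat.find hex → f i ≠ f j := by
    intro i j hij hjk hfij
    rcases hjk.lt_or_eq with hjk | rfl
    · exact hchord i (j + 1) (by omega) hjk (hfij ▸ hf j hjk)
    · exact absurd (Nat.find_min' hex ⟨f, hf0, hfij.trans hfk, fun n hn => hf n (by omega)⟩)
        (by omega)
  refine ⟨Nat.find hex, f, hf0, hfk, hf, fun i hi j hj hfij => ?_, hchord⟩
  by_contra hij
  rcases Nat.lt_or_gt_of_ne hij with hij | hij
  · exact hne i j hij hj hfij
  · exact hne j i hij hi hfij.symm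

end Relation

namespace SimpleGraph

section TreePaths

variable {V : Type*} {T T' : SimpleGraph V} {e f y : Sym2 V}

def pathEdges (T : SimpleGraph V) (f : Sym2 V) : Set (Sym2 V) :=
  {e | ∃ u v, f = s(u, v) ∧ ∃ p : T.Walk u v, p.IsPath ∧ e ∈ p.edges}

lemma pathEdges_subset_edgeSet : T.pathEdges f ⊆ T.edgeSet := by
  rintro e ⟨u, v, -, p, -, he⟩
  exact p.edges_subset_edgeSet he

lemma Walk.IsPath.mem_pathEdges {u v : V} {p : T.Walk u v} (hp : p.IsPath) (he : e ∈ p.edges) :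
    e ∈ T.pathEdges s(u, v) :=
  ⟨u, v, rfl, p, hp, he⟩

lemma IsAcyclic.mem_edges_of_mem_pathEdges (hT : T.IsAcyclic) {u v : V} {p : T.Walk u v}
    (hp : p.IsPath) (he : e ∈ T.pathEdges s(u, v)) : e ∈ p.edges := by
  obtain ⟨a, b, hab, q, hq, heq⟩ := he
  rcases Sym2.eq_iff.mp hab with ⟨rfl, rfl⟩ | ⟨rfl, rfl⟩
  · have hpq : p = q := congrArg Subtype.val ((hT.subsingleton_path u v).elim ⟨p, hp⟩ ⟨q, hq⟩)
    rwa [hpq]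
  · have hpq : p = q.reverse :=
      congrArg Subtype.val ((hT.subsingleton_path u v).elim ⟨p, hp⟩ ⟨q.reverse, hq.reverse⟩)
    simpa [hpq] using heq

lemma pathEdges_eq_of_subset (hT : T.Connected) (hT' : T'.IsAcyclic)
    (h : T.pathEdges f ⊆ T'.edgeSet) : T'.pathEdges f = T.pathEdges f := by
  obtain ⟨u, v⟩ := f
  obtain ⟨p, hp⟩ := hT.exists_isPath u v
  have hpT' : ∀ e ∈ p.edges, e ∈ T'.edgeSet := fun e he => h (hp.mem_pathEdges he)
  ext e
  refine ⟨fun he => ?_, fun ⟨a, b, hab, q, hq, he⟩ => ?_⟩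
  · refine hp.mem_pathEdges ?_
    rw [← p.edges_transfer hpT']
    exact hT'.mem_edges_of_mem_pathEdges (hp.transfer hpT') he
  · have hqT' : ∀ e ∈ q.edges, e ∈ T'.edgeSet := fun e he' => h ⟨a, b, hab, q, hq, he'⟩
    exact ⟨a, b, hab, q.transfer T' hqT', hq.transfer hqT', by rwa [q.edges_transfer]⟩

lemma IsTree.exists_isTree_insert_diff [Finite V] (hT : T.IsTree) (hf : f ∉ T.edgeSet)
    (hy : y ∈ T.pathEdges f) :
    ∃ T' : SimpleGraph V, T'.IsTree ∧ T'.edgeSet = insert f T.edgeSet \ {y} := by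
  obtain ⟨u, v, rfl, p, hp, hyp⟩ := hy
  have huv : u ≠ v := by
    rintro rfl
    simp [(Walk.isPath_iff_nil.mp hp).eq_nil] at hyp
  have hE : (T ⊔ edge u v).edgeSet = insert s(u, v) T.edgeSet := by
    rw [edgeSet_sup, edgeSet_edge_of_ne huv, Set.union_singleton]
  have hvu : (T ⊔ edge u v).Adj v u := by simp [edge_adj, huv.symm]
  -- `y` lies on the cycle closed by the new edge, so it is not a bridge
  have hcycle : (Walk.cons hvu (p.mapLe le_sup_left)).IsCycle := by
    refine Path.cons_isCycle ⟨_, hp.mapLe le_sup_left⟩ hvu fun h => hf ?_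
    rw [Sym2.eq_swap]
    exact p.edges_subset_edgeSet (by simpa using h)
  obtain ⟨a, b⟩ := y
  have hconn : ((T ⊔ edge u v).deleteEdges {s(a, b)}).Connected :=
    (hT.connected.mono le_sup_left).connected_delete_edge_of_not_isBridge
      fun hb => hb.notMem_edges_of_isCycle hcycle (by simp [hyp])
  refine ⟨_, isTree_iff_connected_and_card.mpr ⟨hconn, ?_⟩, by rw [edgeSet_deleteEdges, hE]⟩
  have hcard := (isTree_iff_connected_and_card.mp hT).2
  rw [Nat.card_coe_set_eq] at hcard
  rw [edgeSet_deleteEdges, hE, Nat.card_coe_set_eq,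
    Set.ncard_sdiff_singleton_of_mem (Set.mem_insert_of_mem _ (p.edges_subset_edgeSet hyp)),
    Set.ncard_insert_of_notMem hf]
  omega

/-- Exchanges `x j ↦ y j` performed in decreasing order of `j` never disturb the tree paths of
the pairs still to come. -/
lemma IsTree.exists_isTree_exchange_finset [Finite V] {ι : Type*} [LinearOrder ι]
    (x y : ι → Sym2 V) (P : Finset ι) (hT : T.IsTree)
    (hx : ∀ j ∈ P, x j ∉ T.edgeSet) (hy : ∀ j ∈ P, y j ∈ T.pathEdges (x j))
    (hord : ∀ j ∈ P, ∀ l ∈ P, j < l → y l ∉ T.pathEdges (x j)) :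
    ∃ T' : SimpleGraph V, T'.IsTree ∧ T'.edgeSet = (T.edgeSet ∪ x '' P) \ y '' P := by
  classical
  induction P using Finset.induction_on_max generalizing T with
  | empty => exact ⟨T, hT, by simp⟩
  | insert a P hlt ih =>
    simp only [Finset.mem_insert, forall_eq_or_imp] at hx hy hord
    obtain ⟨T₁, hT₁, hE₁⟩ := hT.exists_isTree_insert_diff hx.1 hy.1
    have hpath : ∀ j ∈ P, T₁.pathEdges (x j) = T.pathEdges (x j) := fun j hj =>
      pathEdges_eq_of_subset hT.connected hT₁.isAcyclic fun e he => by
        rw [hE₁]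
        exact ⟨Set.mem_insert_of_mem _ (pathEdges_subset_edgeSet he),
          fun hey => hord.2 j hj |>.1 (hlt j hj) (by rwa [← hey])⟩
    have hx₁ : ∀ j ∈ P, x j ∉ T₁.edgeSet := fun j hj hj₁ => by
      rw [hE₁] at hj₁
      obtain ⟨hj₁ | hj₁, -⟩ := hj₁
      · exact hord.2 j hj |>.1 (hlt j hj) (hj₁ ▸ hy.1)
      · exact hx.2 j hj hj₁
    obtain ⟨T', hT', hE'⟩ := ih hT₁ hx₁
      (fun j hj => hpath j hj ▸ hy.2 j hj)
      (fun j hj l hl hjl => hpath j hj ▸ (hord.2 j hj).2 l hl hjl)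
    refine ⟨T', hT', ?_⟩
    have hya : y a ∈ T.edgeSet := pathEdges_subset_edgeSet hy.1
    have hxP : ∀ e ∈ x '' P, e ∉ T.edgeSet := by
      rintro _ ⟨j, hj, rfl⟩
      exact hx.2 j hj
    rw [hE', hE₁, Finset.coe_insert, Set.image_insert_eq, Set.image_insert_eq]
    ext e
    by_cases hea : e = y a
    · subst hea
      simp only [Set.mem_sdiff, Set.mem_insert_iff, true_or, not_true_eq_false, and_false,
        iff_false]
      exact fun h => hxP _ (h.1.resolve_left fun h' => h'.2 rfl) hya
    · simp only [Set.mem_sdiff, Set.mem_union, Set.mem_insert_iff, Set.mem_singleton_iff, hea]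
      tauto

lemma Walk.reachable_of_mem_support_of_edges_subset {G H : SimpleGraph V} {u v w : V}
    (p : G.Walk u v) (hp : ∀ e ∈ p.edges, e ∈ H.edgeSet) (hw : w ∈ p.support) :
    H.Reachable u w := by
  classical
  exact ⟨(p.takeUntil w hw).transfer H fun e he => hp e (p.edges_takeUntil_subset_edges hw he)⟩

lemma ncard_le_ncard_edgeSet_add_one_of_reachable [Finite V] {H : SimpleGraph V} {u : V}
    {S : Set V} (hS : ∀ v ∈ S, H.Reachable u v) : S.ncard ≤ H.edgeSet.ncard + 1 := by
  set C := H.connectedComponentMk u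
  calc S.ncard ≤ C.supp.ncard :=
        Set.ncard_le_ncard fun v hv => (C.mem_supp_iff v).mpr
          (ConnectedComponent.eq.mpr (hS v hv).symm)
    _ ≤ Nat.card C.toSimpleGraph.edgeSet + 1 :=
        C.connected_toSimpleGraph.card_vert_le_card_edgeSet_add_one
    _ ≤ H.edgeSet.ncard + 1 := by
        gcongr
        exact Nat.card_le_card_of_injective _ (Embedding.induce C.supp).mapEdgeSet.injective

end TreePaths

section Exchange

variable {V ι : Type*} {T : ι → SimpleGraph V} {g : Sym2 V}

lemma ncard_iUnion_edgeSet_of_isTree [Fintype V] [Fintype ι] (hT : ∀ i, (T i).IsTree)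
    (hdisj : ∀ i j, i ≠ j → Disjoint (T i).edgeSet (T j).edgeSet) :
    ((⋃ i, (T i).edgeSet).ncard : ℤ) = Fintype.card ι * ((Fintype.card V : ℤ) - 1) := by
  have htree : ∀ i, ((T i).edgeSet.ncard : ℤ) = Fintype.card V - 1 := fun i => by
    have := (isTree_iff_connected_and_card.mp (hT i)).2
    rw [Nat.card_coe_set_eq, Nat.card_eq_fintype_card] at this
    omega
  rw [Set.ncard_iUnion_of_finite (fun _ => Set.toFinite _) hdisj, finsum_eq_sum_of_fintype]
  push_cast
  simp only [htree, Finset.sum_const, Finset.card_univ, nsmul_eq_mul]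

/-- `T i + f - h` is again a tree for some `i`. -/
def ExchangeArc (T : ι → SimpleGraph V) (f h : Sym2 V) : Prop :=
  ∃ i, f ∉ (T i).edgeSet ∧ h ∈ (T i).pathEdges f

def exchangeClosure (T : ι → SimpleGraph V) (g : Sym2 V) : Set (Sym2 V) :=
  {z | Relation.ReflTransGen (ExchangeArc T) g z}

lemma exchangeClosure_subset_edgeSet {G : SimpleGraph V} (hTG : ∀ i, T i ≤ G)
    (hgG : g ∈ G.edgeSet) : exchangeClosure T g ⊆ G.edgeSet := by
  intro z hz
  induction hz with
  | refl => exact hgG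
  | tail _ harc =>
    obtain ⟨i, -, hz⟩ := harc
    exact edgeSet_mono (hTG i) (pathEdges_subset_edgeSet hz)

lemma mem_exchangeClosure_of_mem_pathEdges {z e : Sym2 V} {i : ι} (hz : z ∈ exchangeClosure T g)
    (hzT : z ∉ (T i).edgeSet) (he : e ∈ (T i).pathEdges z) : e ∈ exchangeClosure T g :=
  hz.tail ⟨i, hzT, he⟩

lemma exists_isTree_exchange_along_chain [Finite V] (hT : ∀ i, (T i).IsTree) {k : ℕ}
    {f : ℕ → Sym2 V} {lab : Fin k → ι}
    (hlab : ∀ j : Fin k, f j ∉ (T (lab j)).edgeSet ∧ f (j + 1) ∈ (T (lab j)).pathEdges (f j))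
    (hchord : ∀ i j, i + 1 < j → j ≤ k → ¬ ExchangeArc T (f i) (f j)) (i : ι) :
    ∃ T' : SimpleGraph V, T'.IsTree ∧ T'.edgeSet =
      ((T i).edgeSet ∪ (fun j : Fin k => f j) '' {j | lab j = i}) \
        (fun j : Fin k => f (j + 1)) '' {j | lab j = i} := by
  classical
  simpa using (hT i).exists_isTree_exchange_finset (fun j : Fin k => f j)
    (fun j => f (j + 1)) (Finset.univ.filter (lab · = i))
    (fun j hj => by simpa [(Finset.mem_filter.mp hj).2] using (hlab j).1)
    (fun j hj => by simpa [(Finset.mem_filter.mp hj).2] using (hlab j).2)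
    (fun j hj l _ hjl h => hchord j (l + 1) (by simpa using hjl) (by omega)
      ⟨i, by simpa [(Finset.mem_filter.mp hj).2] using (hlab j).1, h⟩)

theorem exists_isTree_family_le_deleteEdges [Finite V] {G : SimpleGraph V}
    (hT : ∀ i, (T i).IsTree) (hTG : ∀ i, T i ≤ G)
    (hdisj : ∀ i j, i ≠ j → Disjoint (T i).edgeSet (T j).edgeSet) (hgG : g ∈ G.edgeSet)
    (hg : ∀ i, g ∉ (T i).edgeSet) {z : Sym2 V} (hz : z ∈ exchangeClosure T g) :
    ∃ T' : ι → SimpleGraph V, (∀ i, (T' i).IsTree) ∧ (∀ i, T' i ≤ G.deleteEdges {z}) ∧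
      ∀ i j, i ≠ j → Disjoint (T' i).edgeSet (T' j).edgeSet := by
  classical
  obtain ⟨k, f, rfl, rfl, harc, hinj, hchord⟩ := Relation.ReflTransGen.exists_chordless_chain hz
  choose lab hlab using fun j : Fin k => harc j j.2
  choose T' hT' hE' using exists_isTree_exchange_along_chain hT hlab hchord
  set X : ι → Set (Sym2 V) := fun i => (fun j : Fin k => f j) '' {j | lab j = i}
  set Y : ι → Set (Sym2 V) := fun i => (fun j : Fin k => f (j + 1)) '' {j | lab j = i}
  have hTY : ∀ a ≤ k, ∀ i, f a ∈ (T i).edgeSet → f a ∈ Y i := by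
    intro a ha i hai
    obtain _ | a := a
    · exact absurd hai (hg i)
    refine ⟨⟨a, by omega⟩, ?_, rfl⟩
    by_contra hne
    exact Set.disjoint_left.mp (hdisj _ _ hne) (pathEdges_subset_edgeSet (hlab ⟨a, _⟩).2) hai
  have hX : ∀ i, ∀ e ∈ X i, ∃ a < k, f a = e := by
    rintro i _ ⟨j, -, rfl⟩
    exact ⟨j, j.2, rfl⟩
  refine ⟨T', hT', fun i => ?_, fun i i' hii' => ?_⟩
  · rw [← edgeSet_subset_edgeSet, edgeSet_deleteEdges, hE']
    rintro e ⟨he | he, heY⟩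
    · refine ⟨edgeSet_mono (hTG i) he, fun hez => heY ?_⟩
      rw [Set.mem_singleton_iff.mp hez] at he ⊢
      exact hTY k le_rfl i he
    · obtain ⟨a, hak, rfl⟩ := hX i e he
      refine ⟨?_, fun hez => hak.ne (hinj hak.le (Set.mem_Iic.mpr le_rfl) hez)⟩
      obtain _ | a := a
      · exact hgG
      · exact edgeSet_mono (hTG _) (pathEdges_subset_edgeSet (hlab ⟨a, by omega⟩).2)
  · rw [hE', hE', Set.disjoint_left]
    rintro e ⟨he | he, heY⟩ ⟨he' | he', heY'⟩
    · exact Set.disjoint_left.mp (hdisj _ _ hii') he he'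
    · obtain ⟨a, hak, rfl⟩ := hX i' e he'
      exact heY (hTY a hak.le i he)
    · obtain ⟨a, hak, rfl⟩ := hX i e he
      exact heY' (hTY a hak.le i' he')
    · obtain ⟨j, rfl, rfl⟩ := he
      obtain ⟨j', rfl, hjj'⟩ := he'
      obtain rfl : j' = j := Fin.ext (hinj j'.2.le j.2.le hjj')
      exact hii' rfl

lemma reachable_of_mem_exchangeClosure {u : V} (hu : u ∈ g) {z : Sym2 V}
    (hz : z ∈ exchangeClosure T g) {v : V} (hv : v ∈ z) :
    (fromEdgeSet (exchangeClosure T g)).Reachable u v := by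
  induction hz generalizing v with
  | refl =>
    by_cases huv : u = v
    · exact huv ▸ Reachable.refl u
    · refine Adj.reachable ((fromEdgeSet_adj _).mpr ⟨?_, huv⟩)
      rw [← (Sym2.mem_and_mem_iff huv).mp ⟨hu, hv⟩]
      exact Relation.ReflTransGen.refl
  | @tail z' z hz' harc ih =>
    obtain ⟨i, hz'T, a, b, rfl, p, hp, hzp⟩ := harc
    refine (ih (Sym2.mem_mk_left a b)).trans
      (p.reachable_of_mem_support_of_edges_subset (fun e he => ?_) ?_)
    · rw [edgeSet_fromEdgeSet]
      exact ⟨mem_exchangeClosure_of_mem_pathEdges hz' hz'T (hp.mem_pathEdges he),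
        (T i).not_isDiag_of_mem_edgeSet (p.edges_subset_edgeSet he)⟩
    · obtain ⟨c, d⟩ := z
      rcases Sym2.mem_iff.mp hv with rfl | rfl
      · exact p.fst_mem_support_of_mem_edges hzp
      · exact p.snd_mem_support_of_mem_edges hzp

/-- An edge of the closure outside `T i` is bridged by its `T i`-path, which lies in the
closure. -/
lemma reachable_inf_of_reachable {i : ι} (hT : (T i).Connected) {u v : V}
    (h : (fromEdgeSet (exchangeClosure T g)).Reachable u v) :
    (T i ⊓ fromEdgeSet (exchangeClosure T g)).Reachable u v := by
  rw [reachable_iff_reflTransGen] at h ⊢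
  refine Relation.reflTransGen_closed (fun a b hab => ?_) u v h
  rw [← reachable_iff_reflTransGen]
  have hab' := (fromEdgeSet_adj _).mp hab
  by_cases habT : s(a, b) ∈ (T i).edgeSet
  · exact Adj.reachable ((inf_adj _ _ _ _).mpr ⟨habT, hab⟩)
  obtain ⟨p, hp⟩ := hT.exists_isPath a b
  refine p.reachable_of_mem_support_of_edges_subset (fun e he => ?_) p.end_mem_support
  rw [edgeSet_inf, edgeSet_fromEdgeSet]
  exact ⟨p.edges_subset_edgeSet he,
    mem_exchangeClosure_of_mem_pathEdges hab'.1 habT (hp.mem_pathEdges he),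
    (T i).not_isDiag_of_mem_edgeSet (p.edges_subset_edgeSet he)⟩

theorem card_mul_ncard_sub_one_lt_ncard_exchangeClosure [Finite V] [Fintype ι]
    (hT : ∀ i, (T i).Connected) (hdisj : ∀ i j, i ≠ j → Disjoint (T i).edgeSet (T j).edgeSet)
    (hg : ∀ i, g ∉ (T i).edgeSet) :
    (Fintype.card ι : ℤ) * ({v | ∃ z ∈ exchangeClosure T g, v ∈ z}.ncard - 1) <
      (exchangeClosure T g).ncard := by
  set R := exchangeClosure T g
  set S := {v | ∃ z ∈ R, v ∈ z}
  obtain ⟨u, w⟩ := g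
  have hS : ∀ i, S.ncard ≤ (R ∩ (T i).edgeSet).ncard + 1 := fun i => calc
    S.ncard ≤ (T i ⊓ fromEdgeSet R).edgeSet.ncard + 1 :=
      ncard_le_ncard_edgeSet_add_one_of_reachable fun v ⟨z, hz, hv⟩ =>
        reachable_inf_of_reachable (hT i) (reachable_of_mem_exchangeClosure
          (Sym2.mem_mk_left u w) hz hv)
    _ ≤ (R ∩ (T i).edgeSet).ncard + 1 := by
      gcongr
      · exact Set.toFinite _
      · rw [edgeSet_inf, edgeSet_fromEdgeSet]
        exact fun e he => ⟨he.2.1, he.1⟩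
  have hR : 1 + ∑ i, (R ∩ (T i).edgeSet).ncard ≤ R.ncard := by
    have hnot : s(u, w) ∉ ⋃ i, R ∩ (T i).edgeSet := by
      simp only [Set.mem_iUnion, not_exists]
      exact fun i h => hg i h.2
    rw [← finsum_eq_sum_of_fintype, ← Set.ncard_iUnion_of_finite (fun _ => Set.toFinite _)
      fun i j hij => (hdisj i j hij).mono Set.inter_subset_right Set.inter_subset_right,
      add_comm, ← Set.ncard_insert_of_notMem hnot]
    exact Set.ncard_le_ncard (Set.insert_subset Relation.ReflTransGen.refl
      (Set.iUnion_subset fun i => Set.inter_subset_left))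
  have hsum := Finset.card_nsmul_le_sum Finset.univ (fun i => ((R ∩ (T i).edgeSet).ncard : ℤ))
    (S.ncard - 1) fun i _ => by have := hS i; omega
  simp only [Finset.card_univ, nsmul_eq_mul] at hsum
  have hR' : (1 : ℤ) + ∑ i, ((R ∩ (T i).edgeSet).ncard : ℤ) ≤ R.ncard := by exact_mod_cast hR
  linarith

end Exchange

end SimpleGraph

open SimpleGraph

lemma exchangeClosure_not_subset_of_isSparse {V : Type*} [Fintype V] {m : ℕ}
    {M : SimpleGraph V} (hsp : IsSparse m M) {T : Fin m → SimpleGraph V}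
    (hT : ∀ i, (T i).Connected) (hdisj : ∀ i j, i ≠ j → Disjoint (T i).edgeSet (T j).edgeSet)
    {g : Sym2 V} (hg : ∀ i, g ∉ (T i).edgeSet) : ¬ exchangeClosure T g ⊆ M.edgeSet := by
  intro hRM
  set S := {v | ∃ z ∈ exchangeClosure T g, v ∈ z}
  obtain ⟨u, w⟩ := g
  have hlt := card_mul_ncard_sub_one_lt_ncard_exchangeClosure hT hdisj hg
  have hle : (exchangeClosure T s(u, w)).ncard ≤ eIn M S :=
    Set.ncard_le_ncard (fun z hz => ⟨hRM hz, fun v hv => ⟨z, hz, hv⟩⟩) (Set.toFinite _)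
  have := hsp S ⟨u, s(u, w), Relation.ReflTransGen.refl, Sym2.mem_mk_left u w⟩
  rw [Fintype.card_fin] at hlt
  linarith [(Nat.cast_le (α := ℤ)).mpr hle]

theorem stmt10_general {V : Type*} [Fintype V] (m : ℕ) (G M : SimpleGraph V)
    (hsp : IsSparse m M) (htc : IsTreeConn m G)
    (hdel : ∀ e ∈ G.edgeSet, e ∉ M.edgeSet → ¬ IsTreeConn m (G.deleteEdges {e})) :
    (G.edgeSet.ncard : ℤ) = m * ((Fintype.card V : ℤ) - 1) := by
  obtain ⟨T, hTG, hT, hdisj⟩ := htc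
  suffices hcover : G.edgeSet ⊆ ⋃ i, (T i).edgeSet by
    rw [hcover.antisymm (Set.iUnion_subset fun i => edgeSet_mono (hTG i))]
    simpa using ncard_iUnion_edgeSet_of_isTree hT hdisj
  intro g hgG
  by_contra hgT
  simp only [Set.mem_iUnion, not_exists] at hgT
  refine exchangeClosure_not_subset_of_isSparse hsp (fun i => (hT i).connected) hdisj hgT
    fun z hz => ?_
  by_contra hzM
  obtain ⟨T', hT', hT'G, hdisj'⟩ := exists_isTree_family_le_deleteEdges hT hTG hdisj hgG hgT hz
  exact hdel z (exchangeClosure_subset_edgeSet hTG hgG hz) hzM ⟨T', hT'G, hT', hdisj'⟩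

theorem stmt10 {V : Type*} [Fintype V] (m : ℕ) (hm : 0 < m) (G M : SimpleGraph V)
    (hMG : M ≤ G) (hsp : IsSparse m M) (htc : IsTreeConn m G)
    (hdel : ∀ e ∈ G.edgeSet, e ∉ M.edgeSet → ¬ IsTreeConn m (G.deleteEdges {e})) :
    (G.edgeSet.ncard : ℤ) = m * ((Fintype.card V : ℤ) - 1) :=
  stmt10_general m G M hsp htc hdel
end

section
/- Let G be a k-edge-connected graph with a k₀-edge-connected spanning subgraph G₀ and a (k-k₀)-sparse spanning subgraph M, where 0 ≤ k₀ ≤ k. If G - e is not k-edge-connected for every edge e ∈ E(G) \ E(G₀ ∪ M), then the graph G \ E(G₀) obtained by removing the edges of G₀ is (k-k₀)-sparse. -/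
open SimpleGraph

noncomputable def cutE {V : Type*} (G : SimpleGraph V) (S : Set V) : ℕ :=
  {e ∈ G.edgeSet | ∃ u ∈ e, ∃ w ∈ e, u ∈ S ∧ w ∉ S}.ncard

def EdgeConn {V : Type*} (k : ℕ) (G : SimpleGraph V) : Prop :=
  ∀ S : Set V, S.Nonempty → Sᶜ.Nonempty → k ≤ cutE G S

private lemma stmt11_aux {V : Type*} [Fintype V] (k k₀ : ℕ)
    (G G₀ M : SimpleGraph V) (hG₀ : G₀ ≤ G)
    (hGconn : EdgeConn k G) (hG₀conn : EdgeConn k₀ G₀)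
    (hMsp : IsSparse (k - k₀) M)
    (hdel : ∀ e ∈ G.edgeSet, e ∉ G₀.edgeSet → e ∉ M.edgeSet →
      ¬ EdgeConn k (G.deleteEdges {e})) :
    ∀ n : ℕ, ∀ S : Set V, S.ncard ≤ n → S.Nonempty →
      (eIn (G \ G₀) S : ℤ) ≤ (k - k₀ : ℕ) * S.ncard - (k - k₀ : ℕ) := by
  intro n
  induction n with
  | zero =>
    intro S hcard hne
    have := (Set.ncard_pos (Set.toFinite S)).mpr hne
    omega
  | succ n ih =>
    intro S hcard hne
    by_contra hlt
    push_neg at hlt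
    set m : ℕ := k - k₀ with hm
    set H : SimpleGraph V := G \ G₀ with hH
    have hHG : H ≤ G := sdiff_le
    -- find an edge of H inside S that is not in M
    have hMS : (eIn M S : ℤ) ≤ (m : ℤ) * S.ncard - m := hMsp S hne
    have hnsub : ¬ ({e ∈ H.edgeSet | ∀ v ∈ e, v ∈ S} ⊆
        {e ∈ M.edgeSet | ∀ v ∈ e, v ∈ S}) := by
      intro hsub
      have hle : eIn H S ≤ eIn M S := Set.ncard_le_ncard hsub (Set.toFinite _)
      have : (eIn H S : ℤ) ≤ (eIn M S : ℤ) := by exact_mod_cast hle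
      linarith
    obtain ⟨e, he, heM⟩ := Set.not_subset.mp hnsub
    obtain ⟨heH, heS⟩ := he
    have heM' : e ∉ M.edgeSet := fun h => heM ⟨h, heS⟩
    have heG : e ∈ G.edgeSet ∧ e ∉ G₀.edgeSet := by
      rwa [hH, SimpleGraph.edgeSet_sdiff] at heH
    have hnot := hdel e heG.1 heG.2 heM'
    rw [EdgeConn] at hnot
    push_neg at hnot
    obtain ⟨T, hT1, hT2, hTlt⟩ := hnot
    -- cut set facts
    set CG : Set (Sym2 V) := {e ∈ G.edgeSet | ∃ u ∈ e, ∃ w ∈ e, u ∈ T ∧ w ∉ T} with hCG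
    have hdelset : {e' ∈ (G.deleteEdges {e}).edgeSet |
        ∃ u ∈ e', ∃ w ∈ e', u ∈ T ∧ w ∉ T} = CG \ {e} := by
      ext f
      simp only [hCG, SimpleGraph.edgeSet_deleteEdges, Set.mem_setOf_eq, Set.mem_diff,
        Set.mem_singleton_iff]
      tauto
    have hGT : k ≤ cutE G T := hGconn T hT1 hT2
    -- e must cross T
    have heCG : e ∈ CG := by
      by_contra hec
      have hEq : CG \ {e} = CG := by
        ext f
        simp only [Set.mem_diff, Set.mem_singleton_iff]
        exact ⟨fun h => h.1, fun h => ⟨h, fun hf => hec (hf ▸ h)⟩⟩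
      have : cutE (G.deleteEdges {e}) T = cutE G T := by
        rw [cutE, hdelset, hEq]; rfl
      omega
    -- cutE G T ≤ cutE (G - e) T + 1
    have hcutle : cutE G T ≤ cutE (G.deleteEdges {e}) T + 1 := by
      have hsub : CG ⊆ (CG \ {e}) ∪ {e} := by
        intro f hf
        by_cases hfe : f = e
        · exact Or.inr hfe
        · exact Or.inl ⟨hf, hfe⟩
      calc CG.ncard ≤ ((CG \ {e}) ∪ {e}).ncard :=
            Set.ncard_le_ncard hsub (Set.toFinite _)
        _ ≤ (CG \ {e}).ncard + ({e} : Set (Sym2 V)).ncard := Set.ncard_union_le _ _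
        _ = cutE (G.deleteEdges {e}) T + 1 := by
            rw [cutE, hdelset, Set.ncard_singleton]
    -- G₀-cut and H-cut are disjoint subsets of the G-cut
    have hsplit : cutE G₀ T + cutE H T ≤ cutE G T := by
      set C0 : Set (Sym2 V) := {e ∈ G₀.edgeSet | ∃ u ∈ e, ∃ w ∈ e, u ∈ T ∧ w ∉ T} with hC0
      set C1 : Set (Sym2 V) := {e ∈ H.edgeSet | ∃ u ∈ e, ∃ w ∈ e, u ∈ T ∧ w ∉ T} with hC1
      have hdis : Disjoint C0 C1 := by
        rw [Set.disjoint_left]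
        intro f hf0 hf1
        have h1 := hf1.1
        rw [hH, SimpleGraph.edgeSet_sdiff] at h1
        exact h1.2 hf0.1
      have hsub : C0 ∪ C1 ⊆ CG := by
        rintro f (hf | hf)
        · exact ⟨SimpleGraph.edgeSet_subset_edgeSet.mpr hG₀ hf.1, hf.2⟩
        · exact ⟨SimpleGraph.edgeSet_subset_edgeSet.mpr hHG hf.1, hf.2⟩
      calc cutE G₀ T + cutE H T = (C0 ∪ C1).ncard :=
            (Set.ncard_union_eq hdis (Set.toFinite _) (Set.toFinite _)).symm
        _ ≤ CG.ncard := Set.ncard_le_ncard hsub (Set.toFinite _)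
        _ = cutE G T := rfl
    have hG₀T : k₀ ≤ cutE G₀ T := hG₀conn T hT1 hT2
    have hHcut : cutE H T ≤ m := by omega
    -- e crosses T, with both endpoints in S
    obtain ⟨-, u, hue, w, hwe, huT, hwT⟩ := heCG
    have huS : u ∈ S := heS u hue
    have hwS : w ∈ S := heS w hwe
    -- split S
    set S₁ : Set V := S ∩ T with hS₁
    set S₂ : Set V := S \ T with hS₂
    have hS₁ne : S₁.Nonempty := ⟨u, huS, huT⟩
    have hS₂ne : S₂.Nonempty := ⟨w, hwS, hwT⟩
    have hsum : S₁.ncard + S₂.ncard = S.ncard :=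
      Set.ncard_inter_add_ncard_diff_eq_ncard S T (Set.toFinite S)
    have hS₁lt : S₁.ncard < S.ncard := by
      refine Set.ncard_lt_ncard ?_ (Set.toFinite S)
      exact ⟨Set.inter_subset_left, fun h => hwT (h hwS).2⟩
    have hS₂lt : S₂.ncard < S.ncard := by
      refine Set.ncard_lt_ncard ?_ (Set.toFinite S)
      exact ⟨Set.diff_subset, fun h => (h huS).2 huT⟩
    have ih₁ := ih S₁ (by omega) hS₁ne
    have ih₂ := ih S₂ (by omega) hS₂ne
    -- decomposition of edges inside S
    have hdecomp : eIn H S ≤ eIn H S₁ + eIn H S₂ + cutE H T := by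
      have hsub : {e ∈ H.edgeSet | ∀ v ∈ e, v ∈ S} ⊆
          {e ∈ H.edgeSet | ∀ v ∈ e, v ∈ S₁} ∪ {e ∈ H.edgeSet | ∀ v ∈ e, v ∈ S₂} ∪
          {e ∈ H.edgeSet | ∃ u ∈ e, ∃ w ∈ e, u ∈ T ∧ w ∉ T} := by
        intro f hf
        induction f with
        | h a b =>
          obtain ⟨hfH, hfS⟩ := hf
          have haS : a ∈ S := hfS a (Sym2.mem_mk_left a b)
          have hbS : b ∈ S := hfS b (Sym2.mem_mk_right a b)
          by_cases haT : a ∈ T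
          · by_cases hbT : b ∈ T
            · refine Or.inl (Or.inl ⟨hfH, ?_⟩)
              intro v hv
              rcases Sym2.mem_iff.mp hv with rfl | rfl
              · exact ⟨haS, haT⟩
              · exact ⟨hbS, hbT⟩
            · exact Or.inr ⟨hfH, a, Sym2.mem_mk_left a b, b, Sym2.mem_mk_right a b, haT, hbT⟩
          · by_cases hbT : b ∈ T
            · exact Or.inr ⟨hfH, b, Sym2.mem_mk_right a b, a, Sym2.mem_mk_left a b, hbT, haT⟩
            · refine Or.inl (Or.inr ⟨hfH, ?_⟩)
              intro v hv
              rcases Sym2.mem_iff.mp hv with rfl | rfl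
              · exact ⟨haS, haT⟩
              · exact ⟨hbS, hbT⟩
      calc eIn H S ≤ _ := Set.ncard_le_ncard hsub (Set.toFinite _)
        _ ≤ _ + cutE H T := Set.ncard_union_le _ _
        _ ≤ eIn H S₁ + eIn H S₂ + cutE H T :=
            Nat.add_le_add_right (Set.ncard_union_le _ _) _
    -- final arithmetic
    have h1 : (eIn H S : ℤ) ≤ (eIn H S₁ : ℤ) + eIn H S₂ + cutE H T := by exact_mod_cast hdecomp
    have h2 : (cutE H T : ℤ) ≤ m := by exact_mod_cast hHcut
    have h3 : ((S₁.ncard : ℤ) + S₂.ncard) = S.ncard := by exact_mod_cast hsum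
    have hm0 : (0:ℤ) ≤ m := by positivity
    nlinarith [ih₁, ih₂]

theorem stmt11 {V : Type*} [Fintype V] (k k₀ : ℕ) (hk : k₀ ≤ k)
    (G G₀ M : SimpleGraph V) (hG₀ : G₀ ≤ G) (hM : M ≤ G)
    (hGconn : EdgeConn k G) (hG₀conn : EdgeConn k₀ G₀)
    (hMsp : IsSparse (k - k₀) M)
    (hdel : ∀ e ∈ G.edgeSet, e ∉ G₀.edgeSet → e ∉ M.edgeSet →
      ¬ EdgeConn k (G.deleteEdges {e})) :
    IsSparse (k - k₀) (G \ G₀) := by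
  intro S hne
  exact stmt11_aux k k₀ G G₀ M hG₀ hGconn hG₀conn hMsp hdel S.ncard S le_rfl hne
end

section
/- Let H be a graph and φ a nonnegative real-valued function on V(H). Then there exists an independent set I of vertices of H such that Σ_{v∈V(H)} φ(v) ≤ Σ_{v∈I} φ(v)(d_H(v) + 1). -/
open SimpleGraph

/-! Greedy choice: put a vertex `v` of maximal weight into `I` and delete `v` together with its
neighbours. Every deleted vertex weighs at most `φ v`, so the deleted weight is at most
`φ v * (d v + 1)`, which is exactly what `v` contributes to the right-hand side. -/

open Finset

namespace SimpleGraph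

variable {V R : Type*} [DecidableEq V] {G : SimpleGraph V} [DecidableRel G.Adj] [G.LocallyFinite]
  [CommRing R] [LinearOrder R] [IsStrictOrderedRing R] {w : V → R}

theorem sum_filter_closedNbhd_le {S : Finset V} {v : V} (hmax : ∀ x ∈ S, w x ≤ w v)
    (hv : 0 ≤ w v) :
    ∑ x ∈ S with x = v ∨ G.Adj v x, w x ≤ w v * (G.degree v + 1) := by
  have hcard : #{x ∈ S | x = v ∨ G.Adj v x} ≤ G.degree v + 1 := calc
    _ ≤ #(insert v (G.neighborFinset v)) :=
      card_le_card fun x hx => by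
        simp only [mem_filter, mem_insert, mem_neighborFinset] at hx ⊢
        exact hx.2
    _ ≤ G.degree v + 1 := card_insert_le _ _
  calc ∑ x ∈ S with x = v ∨ G.Adj v x, w x
      ≤ #{x ∈ S | x = v ∨ G.Adj v x} • w v :=
        sum_le_card_nsmul _ _ _ fun x hx => hmax x (mem_filter.1 hx).1
    _ ≤ w v * (G.degree v + 1) := by
        rw [nsmul_eq_mul, mul_comm]
        exact mul_le_mul_of_nonneg_left (by exact_mod_cast hcard) hv

theorem exists_isIndepSet_subset_sum_le (S : Finset V) (hw : ∀ v ∈ S, 0 ≤ w v) :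
    ∃ I ⊆ S, G.IsIndepSet (I : Set V) ∧
      ∑ x ∈ S, w x ≤ ∑ v ∈ I, w v * (G.degree v + 1) := by
  induction S using Finset.strongInduction with
  | H S ih =>
  rcases S.eq_empty_or_nonempty with rfl | hS
  · exact ⟨∅, subset_rfl, by simp, by simp⟩
  obtain ⟨v, hvS, hmax⟩ := S.exists_max_image w hS
  set S' := S.filter fun x => ¬(x = v ∨ G.Adj v x)
  have hS' : S' ⊂ S := filter_ssubset.2 ⟨v, hvS, by simp⟩
  obtain ⟨I, hIS', hI, hsum⟩ := ih S' hS' fun x hx => hw x (hS'.subset hx)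
  have hIS : ∀ x ∈ I, x ∈ S ∧ x ≠ v ∧ ¬G.Adj v x := fun x hx => by
    simpa [S', not_or] using hIS' hx
  refine ⟨insert v I, insert_subset hvS fun x hx => (hIS x hx).1, ?_, ?_⟩
  · rw [coe_insert, IsIndepSet, Set.pairwise_insert]
    exact ⟨hI, fun x hx _ => ⟨(hIS x hx).2.2, fun h => (hIS x hx).2.2 h.symm⟩⟩
  · rw [← sum_filter_add_sum_filter_not S fun x => x = v ∨ G.Adj v x,
      sum_insert fun hv => (hIS v hv).2.1 rfl]
    exact add_le_add (sum_filter_closedNbhd_le hmax (hw v hvS)) hsum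

end SimpleGraph

theorem stmt19 {V : Type*} [Fintype V] (H : SimpleGraph V) (phi : V → ℝ)
    (hphi : ∀ v, 0 ≤ phi v) :
    ∃ I : Finset V, (∀ u ∈ I, ∀ w ∈ I, ¬ H.Adj u w) ∧
      ∑ v, phi v ≤ ∑ v ∈ I, phi v * (((H.neighborSet v).ncard : ℝ) + 1) := by
  classical
  obtain ⟨I, -, hI, hsum⟩ := H.exists_isIndepSet_subset_sum_le Finset.univ fun v _ => hphi v
  refine ⟨I, fun u hu w hw => ?_, ?_⟩
  · rcases eq_or_ne u w with rfl | huw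
    · exact H.irrefl
    · exact hI hu hw huw
  · simpa only [Set.ncard_eq_toFinset_card', Set.toFinset_card, card_neighborSet_eq_degree]
      using hsum
end
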